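/- If (0, x₁, x₂, x₃) ∈ ℍ_N, then (x₁, x₂, x₃, 0) ∈ 𝔽. -/

import Mathlib

/-!
If `A` is a contraction with `a₂₁ = 0`, then `det A = a₁₁ a₂₂`, and the diagonal matrix
`diag(a₁₁, a₂₂)` is again a contraction, since each entry of a matrix is bounded by its operator
norm. This diagonal matrix has vanishing off-diagonal sum, so it realises `(a₁₁, a₂₂, det A, 0)`
as a point of `𝔽`.
-/

/-- The operator norm of a 2×2 complex matrix, acting on the Euclidean space ℂ². -/
noncomputable def opNorm (A : Matrix (Fin 2) (Fin 2) ℂ) : ℝ :=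
  ‖LinearMap.toContinuousLinearMap (Matrix.toEuclideanLin A)‖

/-- The domain 𝔽 = {(a₁₁, a₂₂, det A, a₁₂ + a₂₁) : A ∈ M₂(ℂ), ‖A‖ < 1}. -/
noncomputable def domF : Set (ℂ × ℂ × ℂ × ℂ) :=
  {w | ∃ A : Matrix (Fin 2) (Fin 2) ℂ, opNorm A < 1 ∧
    w = (A 0 0, A 1 1, A.det, A 0 1 + A 1 0)}

/-- The normed hexablock ℍ_N = {(a₂₁, a₁₁, a₂₂, det A) : A ∈ M₂(ℂ), ‖A‖ < 1}. -/
noncomputable def HN : Set (ℂ × ℂ × ℂ × ℂ) :=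
  {w | ∃ A : Matrix (Fin 2) (Fin 2) ℂ, opNorm A < 1 ∧
    w = (A 1 0, A 0 0, A 1 1, A.det)}

open scoped Matrix.Norms.L2Operator

lemma opNorm_eq_l2_opNorm (A : Matrix (Fin 2) (Fin 2) ℂ) : opNorm A = ‖A‖ := rfl

namespace Matrix

lemma norm_entry_le_l2_opNorm {𝕜 m n : Type*} [RCLike 𝕜] [Fintype m] [Fintype n]
    [DecidableEq n] (A : Matrix m n 𝕜) (i : m) (j : n) : ‖A i j‖ ≤ ‖A‖ := by
  set col : EuclideanSpace 𝕜 m := WithLp.toLp 2 (A.col j)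
  have hcol : ‖col‖ ≤ ‖A‖ := by
    simpa using A.l2_opNorm_mulVec (EuclideanSpace.single j 1)
  calc ‖A i j‖ = ‖col i‖ := rfl
    _ ≤ ‖col‖ := PiLp.norm_apply_le col i
    _ ≤ ‖A‖ := hcol

end Matrix

/-- Proposition 2.12(1): if (0, x₁, x₂, x₃) ∈ ℍ_N, then (x₁, x₂, x₃, 0) ∈ 𝔽. -/
theorem stmt11 (x1 x2 x3 : ℂ) (h : ((0 : ℂ), x1, x2, x3) ∈ HN) :
    (x1, x2, x3, (0 : ℂ)) ∈ domF := by
  obtain ⟨A, hA, hw⟩ := h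
  simp only [Prod.mk.injEq] at hw
  obtain ⟨hA10, rfl, rfl, rfl⟩ := hw
  rw [opNorm_eq_l2_opNorm] at hA
  refine ⟨Matrix.diagonal ![A 0 0, A 1 1], ?_, ?_⟩
  · rw [opNorm_eq_l2_opNorm, Matrix.l2_opNorm_diagonal, pi_norm_lt_iff one_pos, Fin.forall_fin_two]
    exact ⟨(A.norm_entry_le_l2_opNorm 0 0).trans_lt hA,
      (A.norm_entry_le_l2_opNorm 1 1).trans_lt hA⟩
  · simp [Matrix.det_fin_two, ← hA10]
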